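/- arXiv:2404.19393 — 3 statements merged into one kernel-verified Lean document; each statement's English description precedes it below -/
import Mathlib

section
/- Let $(\Omega,\mu)$ be a measure space, $d\ge 2$ a real number, $r=\frac{d}{d-1}$, and $u:\Omega\to\mathbb{R}$ measurable. For $i\in\mathbb{Z}$ define $u_i(x)=\phi(2^{1-i}|u(x)|-1)$ with $\phi(t)=\max\{0,\min\{t,1\}\}$. Suppose there exist constants $C>0$ and $a_i\ge 0$ ($i\in\mathbb{Z}$) such that for every $i$ and every $t>0$, $\mu(\{x: u_i(x)>t\})\le C\,t^{-r}\,(2^{1-i}a_i)^{r}$, and $\sum_{i\in\mathbb{Z}}a_i\le A$. Then $\int_{\Omega}|u|^{r}\,d\mu\le C'\,A^{r}$ for a constant $C'$ depending only on $C$ and $d$. -/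
/-!
Split `Ω` into the dyadic shells `{2^i < |u| ≤ 2^(i+1)}`. On a shell `|u|^r ≤ 2^((i+1)r)`, and the
shell lies in `{u_i = 1} ⊆ {u_i > 1/2}`, whose measure the weak-type bound at `t = 1/2` controls
by `C 2^r (2^(1-i) a_i)^r`; the powers of two combine to `C 8^r a_i^r`. Summing over `i` and using
`∑ a_i^r ≤ (∑ a_i)^r` for `r ≥ 1` gives `∫ |u|^r ≤ C 8^r A^r`.
-/

open MeasureTheory

theorem ENNReal.sum_rpow_le_rpow_sum {ι : Type*} (s : Finset ι) (a : ι → ENNReal) {p : ℝ}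
    (hp : 1 ≤ p) : ∑ i ∈ s, a i ^ p ≤ (∑ i ∈ s, a i) ^ p := by
  classical
  induction s using Finset.induction_on with
  | empty => simp [ENNReal.zero_rpow_of_pos (by linarith : (0:ℝ) < p)]
  | insert j s hj ih =>
    rw [Finset.sum_insert hj, Finset.sum_insert hj]
    calc a j ^ p + ∑ i ∈ s, a i ^ p ≤ a j ^ p + (∑ i ∈ s, a i) ^ p := by gcongr
      _ ≤ (a j + ∑ i ∈ s, a i) ^ p := ENNReal.add_rpow_le_rpow_add _ _ hp

theorem ENNReal.tsum_rpow_le_rpow_tsum {ι : Type*} (a : ι → ENNReal) {p : ℝ} (hp : 1 ≤ p) :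
    ∑' i, a i ^ p ≤ (∑' i, a i) ^ p := by
  rw [ENNReal.tsum_eq_iSup_sum]
  refine iSup_le fun s => (ENNReal.sum_rpow_le_rpow_sum s a hp).trans ?_
  exact ENNReal.rpow_le_rpow (ENNReal.sum_le_tsum s) (by linarith)

theorem lintegral_ofReal_abs_rpow_le_tsum_zpow {Ω : Type*} [MeasurableSpace Ω] (μ : Measure Ω)
    {u : Ω → ℝ} (hu : Measurable u) {b r : ℝ} (hb : 1 < b) (hr : 0 < r) :
    ∫⁻ x, ENNReal.ofReal (|u x| ^ r) ∂μ ≤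
      ∑' i : ℤ, ENNReal.ofReal ((b ^ (i + 1)) ^ r) * μ {x | b ^ i < |u x|} := by
  set f : Ω → ENNReal := fun x => ENNReal.ofReal (|u x| ^ r)
  set E : ℤ → Set Ω := fun i => (fun x => |u x|) ⁻¹' Set.Ioc (b ^ i) (b ^ (i + 1))
  have hE : ∀ i, MeasurableSet (E i) := fun i => hu.abs measurableSet_Ioc
  have hcover : ∀ x, f x ≤ ∑' i, (E i).indicator f x := by
    intro x
    rcases eq_or_ne (u x) 0 with h0 | h0
    · simp [f, h0, Real.zero_rpow hr.ne']
    · obtain ⟨i, hi⟩ := exists_mem_Ioc_zpow (abs_pos.2 h0) hb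
      rw [← Set.indicator_of_mem (s := E i) hi f]
      exact ENNReal.le_tsum i
  have hpiece : ∀ i, ∫⁻ x in E i, f x ∂μ ≤
      ENNReal.ofReal ((b ^ (i + 1)) ^ r) * μ {x | b ^ i < |u x|} := fun i =>
    calc ∫⁻ x in E i, f x ∂μ ≤ ∫⁻ _ in E i, ENNReal.ofReal ((b ^ (i + 1)) ^ r) ∂μ :=
          setLIntegral_mono' (hE i) fun x hx =>
            ENNReal.ofReal_le_ofReal (Real.rpow_le_rpow (abs_nonneg _) hx.2 hr.le)
      _ = ENNReal.ofReal ((b ^ (i + 1)) ^ r) * μ (E i) := setLIntegral_const _ _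
      _ ≤ _ := by gcongr; exact fun x hx => hx.1
  calc ∫⁻ x, f x ∂μ ≤ ∫⁻ x, ∑' i, (E i).indicator f x ∂μ := lintegral_mono hcover
    _ = ∑' i, ∫⁻ x in E i, f x ∂μ := by
      have hf : Measurable f := (hu.abs.pow_const r).ennreal_ofReal
      rw [lintegral_tsum fun i => (hf.indicator (hE i)).aemeasurable]
      exact tsum_congr fun i => lintegral_indicator (hE i) f
    _ ≤ _ := ENNReal.tsum_le_tsum hpiece

/-- The paper's `u_i` is `dyadicTruncation i ∘ u`. -/
noncomputable def dyadicTruncation (i : ℤ) (y : ℝ) : ℝ :=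
  max 0 (min ((2 : ℝ) ^ (1 - i) * |y| - 1) 1)

theorem dyadicTruncation_eq_one {i : ℤ} {y : ℝ} (hy : (2 : ℝ) ^ i ≤ |y|) :
    dyadicTruncation i y = 1 := by
  have h2 : 2 ≤ (2 : ℝ) ^ (1 - i) * |y| :=
    calc (2 : ℝ) = 2 ^ (1 - i) * 2 ^ i := by rw [← zpow_add₀ two_ne_zero]; norm_num
      _ ≤ 2 ^ (1 - i) * |y| := by gcongr
  rw [dyadicTruncation, min_eq_right (by linarith), max_eq_right zero_le_one]

theorem two_zpow_succ_rpow_mul_weak_bound {C r a : ℝ} (i : ℤ) (ha : 0 ≤ a) :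
    ((2 : ℝ) ^ (i + 1)) ^ r * (C * (1 / 2 : ℝ) ^ (-r) * ((2 : ℝ) ^ (1 - i) * a) ^ r) =
      C * 8 ^ r * a ^ r := by
  have h4 : (2 : ℝ) ^ (i + 1) * 2 ^ (1 - i) = 4 := by
    rw [← zpow_add₀ two_ne_zero, show i + 1 + (1 - i) = 2 by ring]; norm_num
  have h8 : (8 : ℝ) = 2 ^ (i + 1) * 2 ^ (1 - i) * 2 := by rw [h4]; norm_num
  rw [one_div, Real.inv_rpow zero_le_two, Real.rpow_neg zero_le_two, inv_inv,
    Real.mul_rpow (by positivity) ha, h8, Real.mul_rpow (by positivity) zero_le_two,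
    Real.mul_rpow (by positivity) (by positivity)]
  ring

theorem zpow_rpow_mul_measure_le_of_weak_bound {Ω : Type*} [MeasurableSpace Ω] {μ : Measure Ω}
    {u : Ω → ℝ} {C r a : ℝ} (i : ℤ) (ha : 0 ≤ a) (hr : 0 ≤ r)
    (hweak : μ {x | 1 / 2 < dyadicTruncation i (u x)} ≤
      ENNReal.ofReal (C * (1 / 2 : ℝ) ^ (-r) * ((2 : ℝ) ^ (1 - i) * a) ^ r)) :
    ENNReal.ofReal (((2 : ℝ) ^ (i + 1)) ^ r) * μ {x | (2 : ℝ) ^ i < |u x|} ≤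
      ENNReal.ofReal (C * 8 ^ r) * ENNReal.ofReal a ^ r := by
  have hsub : {x | (2 : ℝ) ^ i < |u x|} ⊆ {x | 1 / 2 < dyadicTruncation i (u x)} := by
    intro x hx
    simp only [Set.mem_ofPred_eq, dyadicTruncation_eq_one (le_of_lt hx)]
    norm_num
  calc _ ≤ ENNReal.ofReal (((2 : ℝ) ^ (i + 1)) ^ r) *
        ENNReal.ofReal (C * (1 / 2 : ℝ) ^ (-r) * ((2 : ℝ) ^ (1 - i) * a) ^ r) := by
        gcongr; exact (measure_mono hsub).trans hweak
    _ = ENNReal.ofReal (C * 8 ^ r * a ^ r) := by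
      rw [← ENNReal.ofReal_mul (by positivity), two_zpow_succ_rpow_mul_weak_bound i ha]
    _ = _ := by
      rw [ENNReal.ofReal_mul' (by positivity), ENNReal.ofReal_rpow_of_nonneg ha hr]

/-- Abstract dyadic truncation argument (Lemma 4.2): weak-type estimates for the
truncations `uᵢ = φ(2^{1-i}|u| - 1)` with data `aᵢ` summing to at most `A` yield the
strong `L^r` bound `∫ |u|^r ≤ C' A^r`, with `r = d/(d-1)` and `C'` depending only on
`C` and `d`. -/
theorem stmt7 (C d : ℝ) (hC : 0 < C) (hd : 2 ≤ d) :
    ∃ C' : ℝ, 0 < C' ∧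
      ∀ (Ω : Type) (_ : MeasurableSpace Ω) (μ : Measure Ω)
        (u : Ω → ℝ) (_ : Measurable u) (a : ℤ → ℝ) (_ : ∀ i, 0 ≤ a i) (A : ℝ),
        Summable a → (∑' i, a i) ≤ A →
        (∀ (i : ℤ) (t : ℝ), 0 < t →
          μ {x | t < max 0 (min ((2 : ℝ) ^ (1 - i) * |u x| - 1) 1)} ≤
            ENNReal.ofReal (C * t ^ (-(d / (d - 1))) *
              ((2 : ℝ) ^ (1 - i) * a i) ^ (d / (d - 1)))) →
        ∫⁻ x, ENNReal.ofReal (|u x| ^ (d / (d - 1))) ∂μ ≤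
          ENNReal.ofReal (C' * A ^ (d / (d - 1))) := by
  set r := d / (d - 1)
  have hr : 1 ≤ r := by rw [le_div_iff₀ (by linarith)]; linarith
  refine ⟨C * 8 ^ r, by positivity, fun Ω _ μ u hu a ha A hsum hA hweak => ?_⟩
  have hA0 : 0 ≤ A := (tsum_nonneg ha).trans hA
  have hr0 : 0 < r := by linarith
  calc ∫⁻ x, ENNReal.ofReal (|u x| ^ r) ∂μ
      ≤ ∑' i : ℤ, ENNReal.ofReal (((2 : ℝ) ^ (i + 1)) ^ r) * μ {x | (2 : ℝ) ^ i < |u x|} :=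
        lintegral_ofReal_abs_rpow_le_tsum_zpow μ hu one_lt_two hr0
    _ ≤ ∑' i : ℤ, ENNReal.ofReal (C * 8 ^ r) * ENNReal.ofReal (a i) ^ r :=
        ENNReal.tsum_le_tsum fun i =>
          zpow_rpow_mul_measure_le_of_weak_bound i (ha i) hr0.le (hweak i (1 / 2) one_half_pos)
    _ = ENNReal.ofReal (C * 8 ^ r) * ∑' i : ℤ, ENNReal.ofReal (a i) ^ r := ENNReal.tsum_mul_left
    _ ≤ ENNReal.ofReal (C * 8 ^ r) * (∑' i : ℤ, ENNReal.ofReal (a i)) ^ r := by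
        gcongr; exact ENNReal.tsum_rpow_le_rpow_tsum _ hr
    _ ≤ ENNReal.ofReal (C * 8 ^ r) * ENNReal.ofReal A ^ r := by
        rw [← ENNReal.ofReal_tsum_of_nonneg ha hsum]
        gcongr
    _ = ENNReal.ofReal (C * 8 ^ r * A ^ r) := by
        rw [ENNReal.ofReal_rpow_of_nonneg hA0 hr0.le, ← ENNReal.ofReal_mul' (by positivity)]
end

section
/- Let $C_4>0$, $\tilde{\nu}>1$, and suppose a measurable function $u$ on a finite measure space $(\Omega,\mu)$ satisfies $\|u\|_{L^p(\Omega)}\le C_4\,p^{1-1/\tilde{\nu}}\,\mu(\Omega)^{1/p}$ for every $p>1$. Then for every $\sigma$ with $0<\sigma<\frac{\tilde{\nu}-1}{e\tilde{\nu}}C_4^{-\tilde{\nu}/(\tilde{\nu}-1)}$, one has $\int_{\Omega}\left(e^{\sigma|u|^{\tilde{\nu}/(\tilde{\nu}-1)}}-1\right)d\mu\le \mu(\Omega)\sum_{j=1}^{\infty}\frac{\sigma^j}{j!}C_4^{\frac{j\tilde{\nu}}{\tilde{\nu}-1}}\left(\frac{j\tilde{\nu}}{\tilde{\nu}-1}\right)^{j}<\infty$.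 -/
/-!
With `q = ν / (ν - 1)`, expand `exp (σ |u|^q) - 1 = ∑_{n ≥ 1} σⁿ |u|^{nq} / n!` and integrate
termwise. The hypothesis with `p = nq` gives `∫ |u|^{nq} ≤ C₄^{nq} (nq)ⁿ μ(Ω)`, since
`p^{1/q}` raised to the power `p` is `pⁿ`. The resulting series is dominated by the geometric
series with ratio `e σ C₄^q q < 1`, because `nⁿ ≤ eⁿ n!`.
-/

open MeasureTheory Real
open scoped Nat ENNReal

lemma pow_div_factorial_le_exp_one_pow (n : ℕ) : (n : ℝ) ^ n / n ! ≤ exp 1 ^ n := by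
  rw [exp_one_pow]
  exact pow_div_factorial_le_exp _ n.cast_nonneg n

lemma summable_geometric_mul_pow_div_factorial {x : ℝ} (hx : 0 ≤ x) (hxe : x * exp 1 < 1) :
    Summable fun n : ℕ => x ^ n * ((n : ℝ) ^ n / n !) := by
  refine (summable_geometric_of_lt_one (by positivity) hxe).of_nonneg_of_le
    (fun n => by positivity) fun n => ?_
  rw [mul_pow]
  exact mul_le_mul_of_nonneg_left (pow_div_factorial_le_exp_one_pow n) (by positivity)

lemma ofReal_exp_sub_one_eq_tsum {t : ℝ} (ht : 0 ≤ t) :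
    ENNReal.ofReal (exp t - 1) = ∑' j : ℕ, ENNReal.ofReal (t ^ (j + 1) / (j + 1)!) := by
  have h := (hasSum_nat_add_iff' 1).mpr (NormedSpace.expSeries_div_hasSum_exp t)
  simp only [Finset.range_one, Finset.sum_singleton, pow_zero, Nat.factorial_zero, Nat.cast_one,
    div_one, ← exp_eq_exp_ℝ] at h
  rw [← h.tsum_eq, ENNReal.ofReal_tsum_of_nonneg (fun j => by positivity) h.summable]

lemma lintegral_ofReal_exp_sub_one {Ω : Type*} [MeasurableSpace Ω] {μ : Measure Ω} {f : Ω → ℝ}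
    (hf : Measurable f) (hf0 : ∀ x, 0 ≤ f x) :
    ∫⁻ x, ENNReal.ofReal (exp (f x) - 1) ∂μ =
      ∑' j : ℕ, ∫⁻ x, ENNReal.ofReal (f x ^ (j + 1) / (j + 1)!) ∂μ := by
  rw [lintegral_congr fun x => ofReal_exp_sub_one_eq_tsum (hf0 x)]
  exact lintegral_tsum fun j => (by fun_prop : Measurable _).aemeasurable

lemma lintegral_enorm_rpow_le_of_eLpNorm_le {Ω ε : Type*} [MeasurableSpace Ω] [ENorm ε]
    {μ : Measure Ω} [IsFiniteMeasure μ] {u : Ω → ε} {B p : ℝ} (hB : 0 ≤ B) (hp : 0 < p)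
    (h : eLpNorm u (ENNReal.ofReal p) μ ≤
      ENNReal.ofReal (B * (μ Set.univ).toReal ^ (1 / p))) :
    ∫⁻ x, ‖u x‖ₑ ^ p ∂μ ≤ ENNReal.ofReal (B ^ p) * μ Set.univ := by
  rw [eLpNorm_eq_lintegral_rpow_enorm_toReal (by simpa using hp) ENNReal.ofReal_ne_top,
    ENNReal.toReal_ofReal hp.le] at h
  have h' := ENNReal.rpow_le_rpow h hp.le
  rw [← ENNReal.rpow_mul, one_div_mul_cancel hp.ne', ENNReal.rpow_one,
    ENNReal.ofReal_rpow_of_nonneg (by positivity) hp.le, mul_rpow hB (by positivity),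
    ← rpow_mul ENNReal.toReal_nonneg, one_div_mul_cancel hp.ne', rpow_one,
    ENNReal.ofReal_mul (by positivity), ENNReal.ofReal_toReal (measure_ne_top μ _)] at h'
  exact h'

noncomputable def moserTrudingerTerm (σ C q : ℝ) (j : ℕ) : ℝ :=
  σ ^ (j + 1) / (j + 1)! * C ^ (((j : ℝ) + 1) * q) * (((j : ℝ) + 1) * q) ^ ((j : ℝ) + 1)

section moserTrudingerTerm

variable {σ C q : ℝ}

lemma moserTrudingerTerm_nonneg (hσ : 0 ≤ σ) (hC : 0 ≤ C) (hq : 0 ≤ q) (j : ℕ) :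
    0 ≤ moserTrudingerTerm σ C q j := by
  unfold moserTrudingerTerm
  positivity

lemma moserTrudingerTerm_eq_geometric_mul (hC : 0 ≤ C) (j : ℕ) :
    moserTrudingerTerm σ C q j =
      (σ * C ^ q * q) ^ (j + 1) * (((j + 1 : ℕ) : ℝ) ^ (j + 1) / (j + 1)!) := by
  have hj : (j : ℝ) + 1 = ((j + 1 : ℕ) : ℝ) := by push_cast; rfl
  rw [moserTrudingerTerm, mul_comm _ q, rpow_mul hC, hj, rpow_natCast, rpow_natCast]
  ring

lemma moserTrudingerTerm_eq_mul_rpow (hC : 0 ≤ C) (hq : 0 < q) (j : ℕ) :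
    moserTrudingerTerm σ C q j = σ ^ (j + 1) / (j + 1)! *
      (C * (((j : ℝ) + 1) * q) ^ (1 / q)) ^ (((j : ℝ) + 1) * q) := by
  have hp : 0 ≤ ((j : ℝ) + 1) * q := by positivity
  rw [moserTrudingerTerm, mul_rpow hC (by positivity), ← rpow_mul hp,
    one_div_mul_eq_div, mul_div_cancel_right₀ _ hq.ne', mul_assoc]

lemma summable_moserTrudingerTerm (hσ : 0 ≤ σ) (hC : 0 ≤ C) (hq : 0 ≤ q)
    (h : σ * C ^ q * q * exp 1 < 1) : Summable (moserTrudingerTerm σ C q) := by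
  simp_rw [funext (moserTrudingerTerm_eq_geometric_mul hC)]
  exact (summable_nat_add_iff 1).mpr
    (summable_geometric_mul_pow_div_factorial (by positivity) h)

lemma lintegral_pow_div_factorial_le_moserTrudingerTerm {Ω : Type*} [MeasurableSpace Ω]
    {μ : Measure Ω} [IsFiniteMeasure μ] {u : Ω → ℝ} (hσ : 0 ≤ σ) (hC : 0 ≤ C) (hq : 0 < q)
    (j : ℕ) (hbd : eLpNorm u (ENNReal.ofReal (((j : ℝ) + 1) * q)) μ ≤
      ENNReal.ofReal (C * (((j : ℝ) + 1) * q) ^ (1 / q) *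
        (μ Set.univ).toReal ^ (1 / (((j : ℝ) + 1) * q)))) :
    ∫⁻ x, ENNReal.ofReal ((σ * |u x| ^ q) ^ (j + 1) / (j + 1)!) ∂μ ≤
      ENNReal.ofReal (moserTrudingerTerm σ C q j) * μ Set.univ := by
  set p := ((j : ℝ) + 1) * q with hp_def
  have hp : 0 < p := by positivity
  have hc : 0 ≤ σ ^ (j + 1) / (j + 1)! := by positivity
  have hpt : ∀ x, ENNReal.ofReal ((σ * |u x| ^ q) ^ (j + 1) / (j + 1)!) =
      ENNReal.ofReal (σ ^ (j + 1) / (j + 1)!) * ‖u x‖ₑ ^ p := fun x => by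
    rw [enorm_eq_ofReal_abs, ENNReal.ofReal_rpow_of_nonneg (abs_nonneg _) hp.le,
      ← ENNReal.ofReal_mul hc, mul_pow, ← rpow_natCast (_ ^ q), ← rpow_mul (abs_nonneg _),
      hp_def, mul_comm q]
    push_cast
    ring_nf
  calc ∫⁻ x, ENNReal.ofReal ((σ * |u x| ^ q) ^ (j + 1) / (j + 1)!) ∂μ
      = ENNReal.ofReal (σ ^ (j + 1) / (j + 1)!) * ∫⁻ x, ‖u x‖ₑ ^ p ∂μ := by
        rw [lintegral_congr hpt, lintegral_const_mul' _ _ ENNReal.ofReal_ne_top]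
    _ ≤ ENNReal.ofReal (σ ^ (j + 1) / (j + 1)!) *
          (ENNReal.ofReal ((C * p ^ (1 / q)) ^ p) * μ Set.univ) := by
        gcongr
        exact lintegral_enorm_rpow_le_of_eLpNorm_le (by positivity) hp hbd
    _ = ENNReal.ofReal (moserTrudingerTerm σ C q j) * μ Set.univ := by
        rw [← mul_assoc, ← ENNReal.ofReal_mul hc, moserTrudingerTerm_eq_mul_rpow hC hq]

end moserTrudingerTerm

/-- Moser–Trudinger summation step: if `‖u‖_{L^p} ≤ C₄ p^{1-1/ν̃} μ(Ω)^{1/p}` for all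
`p > 1`, then for `0 < σ < (ν̃-1)/(e ν̃) · C₄^{-ν̃/(ν̃-1)}` the series bounding
`∫ (exp(σ|u|^{ν̃/(ν̃-1)}) - 1)` converges and the integral is bounded by
`μ(Ω)` times its sum. -/
theorem stmt11 {Ω : Type*} [MeasurableSpace Ω] (μ : Measure Ω) [IsFiniteMeasure μ]
    (C₄ ν : ℝ) (hC₄ : 0 < C₄) (hν : 1 < ν)
    (u : Ω → ℝ) (hu : Measurable u)
    (hbd : ∀ p : ℝ, 1 < p → eLpNorm u (ENNReal.ofReal p) μ ≤
      ENNReal.ofReal (C₄ * p ^ (1 - 1 / ν) * ((μ Set.univ).toReal) ^ (1 / p)))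
    (σ : ℝ) (hσ0 : 0 < σ)
    (hσ : σ < (ν - 1) / (Real.exp 1 * ν) * C₄ ^ (-(ν / (ν - 1)))) :
    Summable (fun j : ℕ => σ ^ (j + 1) / (Nat.factorial (j + 1)) *
        C₄ ^ (((j : ℝ) + 1) * ν / (ν - 1)) *
        (((j : ℝ) + 1) * ν / (ν - 1)) ^ ((j : ℝ) + 1)) ∧
      ∫⁻ x, ENNReal.ofReal (Real.exp (σ * |u x| ^ (ν / (ν - 1))) - 1) ∂μ ≤
        μ Set.univ * ENNReal.ofReal (∑' j : ℕ, σ ^ (j + 1) / (Nat.factorial (j + 1)) *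
          C₄ ^ (((j : ℝ) + 1) * ν / (ν - 1)) *
          (((j : ℝ) + 1) * ν / (ν - 1)) ^ ((j : ℝ) + 1)) := by
  have hν1 : 0 < ν - 1 := by linarith
  simp only [mul_div_assoc]
  set q := ν / (ν - 1) with hq_def
  have hq : 1 < q := (one_lt_div hν1).mpr (by linarith)
  have hq_inv : 1 / q = 1 - 1 / ν := by rw [hq_def]; field_simp
  rw [← hq_inv] at hbd
  have hσq : σ * C₄ ^ q * q * exp 1 < 1 := by
    have h : (ν - 1) / (exp 1 * ν) * C₄ ^ (-q) = 1 / (C₄ ^ q * q * exp 1) := by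
      rw [rpow_neg hC₄.le, hq_def]; field_simp
    rw [h, lt_div_iff₀ (by positivity)] at hσ
    linarith
  have hsum := summable_moserTrudingerTerm hσ0.le hC₄.le (by linarith) hσq
  refine ⟨hsum, ?_⟩
  calc ∫⁻ x, ENNReal.ofReal (exp (σ * |u x| ^ q) - 1) ∂μ
      = ∑' j : ℕ, ∫⁻ x, ENNReal.ofReal ((σ * |u x| ^ q) ^ (j + 1) / (j + 1)!) ∂μ :=
        lintegral_ofReal_exp_sub_one (by fun_prop) fun x => by positivity
    _ ≤ ∑' j : ℕ, ENNReal.ofReal (moserTrudingerTerm σ C₄ q j) * μ Set.univ :=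
        ENNReal.tsum_le_tsum fun j =>
          lintegral_pow_div_factorial_le_moserTrudingerTerm hσ0.le hC₄.le (by linarith) j
            (hbd _ (one_lt_mul_of_le_of_lt (by simp) hq))
    _ = μ Set.univ * ENNReal.ofReal (∑' j : ℕ, moserTrudingerTerm σ C₄ q j) := by
        rw [ENNReal.tsum_mul_right, mul_comm, ENNReal.ofReal_tsum_of_nonneg
          (moserTrudingerTerm_nonneg hσ0.le hC₄.le (by linarith)) hsum]
end

section
/- Let $\Lambda(x,r)=\sum_{I}|\lambda_I(x)|r^{d(I)}$ be a finite sum with continuous coefficient functions $\lambda_I$ on a topological space $U$ and positive integer exponents $d(I)$, and let $K\subset U$ be compact. Assume that for every $x\in K$ there is an index $I_x$ with $\lambda_{I_x}(x)\ne 0$ and $d(I_x)=\nu(x):=\min\{d(I):\lambda_I(x)\ne0\}$. Set $\tilde{\nu}(K)=\max_{x\in K}\nu(x)$. Then for every $\delta>0$ there is a constant $C>0$ such that $\Lambda(x,r)\ge C\,r^{\tilde{\nu}(K)}$ for all $x\in K$ and $0<r\le\delta$. -/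
open Finset

/-- Abstract form of Proposition 2.2: a uniform lower bound
`Λ(x,r) = ∑_I |λ_I(x)| r^{d(I)} ≥ C r^{nuK(K)}` on a compact set `K`, for `0 < r ≤ δ`,
where `ν(x) = min{d(I) : λ_I(x) ≠ 0}` and `nuK(K) = max_{x ∈ K} ν(x)`. -/
theorem stmt14 {U : Type*} [TopologicalSpace U] {ι : Type*} [Fintype ι]
    (lam : ι → U → ℝ) (hlam : ∀ I, Continuous (lam I))
    (d : ι → ℕ) (hd : ∀ I, 1 ≤ d I)
    (K : Set U) (hK : IsCompact K)
    (ν : U → ℕ)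
    (hν : ∀ x ∈ K, ∃ I, lam I x ≠ 0 ∧ d I = ν x ∧ ∀ J, lam J x ≠ 0 → ν x ≤ d J)
    (nuK : ℕ) (hub : ∀ x ∈ K, ν x ≤ nuK) (hmax : ∃ x ∈ K, ν x = nuK)
    (δ : ℝ) (hδ : 0 < δ) :
    ∃ C : ℝ, 0 < C ∧ ∀ x ∈ K, ∀ r : ℝ, 0 < r → r ≤ δ →
      C * r ^ nuK ≤ ∑ I : ι, |lam I x| * r ^ d I := by
  set s : Finset ι := Finset.univ.filter (fun I => d I ≤ nuK) with hs
  set g : U → ℝ := fun x => ∑ I ∈ s, |lam I x| with hg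
  have hgcont : Continuous g := by
    apply continuous_finset_sum
    intro I _
    exact (hlam I).abs
  -- g is positive on K
  have hgpos : ∀ x ∈ K, 0 < g x := by
    intro x hx
    obtain ⟨I, hI0, hIν, _⟩ := hν x hx
    have hIs : I ∈ s := by
      simp only [hs, Finset.mem_filter, Finset.mem_univ, true_and]
      rw [hIν]; exact hub x hx
    have : 0 < |lam I x| := abs_pos.mpr hI0
    calc 0 < |lam I x| := this
      _ ≤ g x := Finset.single_le_sum (f := fun J => |lam J x|) (fun J _ => abs_nonneg _) hIs
  -- K nonempty
  obtain ⟨x₀, hx₀K, _⟩ := hmax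
  obtain ⟨z, hzK, hz⟩ := hK.exists_isMinOn ⟨x₀, hx₀K⟩ hgcont.continuousOn
  set c : ℝ := g z with hc
  have hcpos : 0 < c := hgpos z hzK
  set M : ℝ := max 1 δ ^ nuK with hM
  have hM1 : (1:ℝ) ≤ max 1 δ := le_max_left _ _
  have hMpos : 0 < M := pow_pos (lt_of_lt_of_le one_pos hM1) _
  refine ⟨c / M, div_pos hcpos hMpos, ?_⟩
  intro x hx r hr hrδ
  -- key: for I ∈ s, r ^ nuK ≤ r ^ d I * M
  have key : ∀ I ∈ s, r ^ nuK ≤ r ^ d I * M := by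
    intro I hI
    have hdI : d I ≤ nuK := by
      simpa [hs, Finset.mem_filter] using hI
    have : r ^ nuK = r ^ d I * r ^ (nuK - d I) := by
      rw [← pow_add, Nat.add_sub_cancel' hdI]
    rw [this]
    apply mul_le_mul_of_nonneg_left _ (pow_nonneg hr.le _)
    calc r ^ (nuK - d I) ≤ max 1 δ ^ (nuK - d I) := by
          apply pow_le_pow_left₀ hr.le (le_trans hrδ (le_max_right _ _))
      _ ≤ M := pow_le_pow_right₀ (le_trans le_rfl hM1) (Nat.sub_le _ _)
  calc c / M * r ^ nuK ≤ g x / M * r ^ nuK := by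
        gcongr
        exact hz hx
    _ = ∑ I ∈ s, |lam I x| * (r ^ nuK / M) := by
        rw [← Finset.sum_mul]
        ring
    _ ≤ ∑ I ∈ s, |lam I x| * r ^ d I := by
        apply Finset.sum_le_sum
        intro I hI
        apply mul_le_mul_of_nonneg_left _ (abs_nonneg _)
        rw [div_le_iff₀ hMpos]
        exact key I hI
    _ ≤ ∑ I : ι, |lam I x| * r ^ d I := by
        apply Finset.sum_le_sum_of_subset_of_nonneg (Finset.filter_subset _ _)
        intro I _ _
        positivity
end
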